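/- arXiv:2110.15960 — 2 statements merged into one kernel-verified Lean document; each statement's English description precedes it below -/
import Mathlib

section
/- Let X ∈ ℝ^{N×D} have full column rank, y ∈ ℝ^N, and let z be a random vector in ℝ^D with finite second moments and independent coordinates each of positive variance. Then the function θ ↦ E[‖X(θ ⊙ z) − y‖²] has the unique minimizer θ* = (XᵀX ⊙ E[z zᵀ])⁻¹ ((Xᵀy) ⊙ E[z]). -/
open Matrix MeasureTheory ProbabilityTheory
open scoped Matrix

/-!
Writing `B = XᵀX`, `M = E[z zᵀ]` and `m = E[z]`, the objective expands to the quadratic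
`θ ⬝ (B ⊙ M) θ - 2 θ ⬝ (Xᵀy ⊙ m) + ‖y‖²`, so it has the unique minimizer `(B ⊙ M)⁻¹ (Xᵀy ⊙ m)`
as soon as `B ⊙ M` is positive definite. Full column rank makes `B` positive definite, and
independence gives `M = diag(Var z) + m mᵀ`, positive definite because the variances are positive;
the Schur product theorem then applies.
-/

namespace Matrix

variable {m n : Type*} [Fintype n]

theorem mulVec_injective_of_rank_eq_card {K : Type*} [Field K] {A : Matrix m n K}
    (hA : A.rank = Fintype.card n) : Function.Injective A.mulVec := by
  have h := A.mulVecLin.finrank_range_add_finrank_ker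
  rw [← Matrix.rank, hA, Module.finrank_fintype_fun_eq_card, add_eq_left,
    Submodule.finrank_eq_zero] at h
  exact LinearMap.ker_eq_bot.mp h

theorem posDef_transpose_mul_self_of_rank_eq_card [Fintype m] {A : Matrix m n ℝ}
    (hA : A.rank = Fintype.card n) : (Aᵀ * A).PosDef := by
  simpa using PosDef.conjTranspose_mul_self A (mulVec_injective_of_rank_eq_card hA)

theorem dotProduct_hadamard_vecMulVec_mulVec [Fintype m] {R : Type*} [CommSemiring R]
    (B : Matrix m n R) (u a : m → R) (w c : n → R) :
    u ⬝ᵥ (B ⊙ vecMulVec a c) *ᵥ w = (u * a) ⬝ᵥ B *ᵥ (w * c) := by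
  simp only [dotProduct, mulVec, hadamard_apply, vecMulVec_apply, Pi.mul_apply, Finset.mul_sum]
  exact Finset.sum_congr rfl fun i _ => Finset.sum_congr rfl fun j _ => by ring

theorem PosDef.quadratic_lt_of_ne_inv_mulVec [DecidableEq n] {A : Matrix n n ℝ} (hA : A.PosDef)
    (b : n → ℝ) {θ : n → ℝ} (hθ : θ ≠ A⁻¹ *ᵥ b) :
    (A⁻¹ *ᵥ b) ⬝ᵥ A *ᵥ (A⁻¹ *ᵥ b) - 2 * ((A⁻¹ *ᵥ b) ⬝ᵥ b) < θ ⬝ᵥ A *ᵥ θ - 2 * (θ ⬝ᵥ b) := by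
  set θs := A⁻¹ *ᵥ b
  have hsolve : A *ᵥ θs = b := by
    rw [mulVec_mulVec, mul_nonsing_inv _ ((isUnit_iff_isUnit_det A).mp hA.isUnit), one_mulVec]
  have hsymm : θs ⬝ᵥ A *ᵥ θ = θ ⬝ᵥ b := by
    rw [dotProduct_mulVec, ← mulVec_transpose, dotProduct_comm, ← hsolve]
    simpa using congrArg (fun M => θ ⬝ᵥ M *ᵥ θs) hA.isHermitian
  -- completing the square: the gap is `(θ - θs) ⬝ A (θ - θs)`
  have hpos := hA.dotProduct_mulVec_pos (sub_ne_zero.mpr hθ)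
  simp only [star_trivial, mulVec_sub, dotProduct_sub, sub_dotProduct, hsolve, hsymm] at hpos
  rw [hsolve]
  linarith

theorem residual_dotProduct_self [Fintype m] (X : Matrix m n ℝ) (y : m → ℝ) (θ c : n → ℝ) :
    (X *ᵥ (θ * c) - y) ⬝ᵥ (X *ᵥ (θ * c) - y) =
      θ ⬝ᵥ ((Xᵀ * X) ⊙ vecMulVec c c) *ᵥ θ - 2 * (θ ⬝ᵥ (Xᵀ *ᵥ y * c)) + y ⬝ᵥ y := by
  have hquad : X *ᵥ (θ * c) ⬝ᵥ X *ᵥ (θ * c) = θ ⬝ᵥ ((Xᵀ * X) ⊙ vecMulVec c c) *ᵥ θ := by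
    rw [dotProduct_hadamard_vecMulVec_mulVec, ← mulVec_mulVec, dotProduct_mulVec _ Xᵀ,
      vecMul_transpose]
  have hlin : X *ᵥ (θ * c) ⬝ᵥ y = θ ⬝ᵥ (Xᵀ *ᵥ y * c) := by
    rw [← vecMul_transpose, ← dotProduct_mulVec]
    simp only [dotProduct, Pi.mul_apply]
    exact Finset.sum_congr rfl fun i _ => by ring
  rw [← hquad, ← hlin]
  simp only [dotProduct_sub, sub_dotProduct, dotProduct_comm y]
  ring

end Matrix

section Moments

variable {Ω ι κ : Type*} [MeasurableSpace Ω] {μ : Measure Ω}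

theorem secondMoment_eq_diagonal_variance_add_vecMulVec [IsProbabilityMeasure μ] [DecidableEq ι]
    {z : Ω → ι → ℝ} (hz : ∀ i, MemLp (fun ω => z ω i) 2 μ)
    (hindep : iIndepFun (fun i ω => z ω i) μ) :
    (of fun i j => ∫ ω, z ω i * z ω j ∂μ) =
      diagonal (fun i => variance (fun ω => z ω i) μ) +
        vecMulVec (fun i => ∫ ω, z ω i ∂μ) (fun i => ∫ ω, z ω i ∂μ) := by
  ext i j
  rcases eq_or_ne i j with rfl | hij
  · simp [variance_eq_sub (hz i), pow_two, vecMulVec_apply]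
  · simp only [of_apply, Matrix.add_apply, diagonal_apply_ne _ hij, vecMulVec_apply, zero_add]
    exact (hindep.indepFun hij).integral_fun_mul_eq_mul_integral
      (hz i).aestronglyMeasurable (hz j).aestronglyMeasurable

variable [Fintype ι]

theorem posDef_secondMoment [IsProbabilityMeasure μ] [DecidableEq ι] {z : Ω → ι → ℝ}
    (hz : ∀ i, MemLp (fun ω => z ω i) 2 μ) (hindep : iIndepFun (fun i ω => z ω i) μ)
    (hvar : ∀ i, 0 < variance (fun ω => z ω i) μ) :
    (of fun i j => ∫ ω, z ω i * z ω j ∂μ).PosDef := by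
  rw [secondMoment_eq_diagonal_variance_add_vecMulVec hz hindep]
  exact (posDef_diagonal_iff.mpr hvar).add_posSemidef (posSemidef_vecMulVec_self_star _)

theorem integrable_dotProduct (u : ι → ℝ) {f : Ω → ι → ℝ}
    (hf : ∀ i, Integrable (fun ω => f ω i) μ) : Integrable (fun ω => u ⬝ᵥ f ω) μ :=
  integrable_finsetSum _ fun i _ => (hf i).const_mul (u i)

theorem integral_dotProduct (u : ι → ℝ) {f : Ω → ι → ℝ}
    (hf : ∀ i, Integrable (fun ω => f ω i) μ) :
    ∫ ω, u ⬝ᵥ f ω ∂μ = u ⬝ᵥ fun i => ∫ ω, f ω i ∂μ := by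
  simp only [dotProduct]
  rw [integral_finsetSum _ fun i _ => (hf i).const_mul (u i)]
  simp only [integral_const_mul]

theorem integrable_mulVec_apply (w : ι → ℝ) {A : Ω → Matrix κ ι ℝ}
    (hA : ∀ i j, Integrable (fun ω => A ω i j) μ) (i : κ) :
    Integrable (fun ω => (A ω *ᵥ w) i) μ := by
  simpa only [mulVec, dotProduct_comm w] using integrable_dotProduct w (hA i)

variable [Fintype κ]

theorem integral_dotProduct_mulVec (u : κ → ℝ) (w : ι → ℝ) {A : Ω → Matrix κ ι ℝ}
    (hA : ∀ i j, Integrable (fun ω => A ω i j) μ) :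
    ∫ ω, u ⬝ᵥ A ω *ᵥ w ∂μ = u ⬝ᵥ (of fun i j => ∫ ω, A ω i j ∂μ) *ᵥ w := by
  rw [integral_dotProduct u (integrable_mulVec_apply w hA)]
  congr 1
  ext i
  simp only [mulVec, dotProduct, of_apply]
  rw [integral_finsetSum _ fun j _ => (hA i j).mul_const (w j)]
  simp only [integral_mul_const]

theorem integral_residual_dotProduct_self [IsProbabilityMeasure μ] {z : Ω → ι → ℝ}
    (X : Matrix κ ι ℝ) (y : κ → ℝ) (hz : ∀ i, Integrable (fun ω => z ω i) μ)
    (hzz : ∀ i j, Integrable (fun ω => z ω i * z ω j) μ) (θ : ι → ℝ) :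
    ∫ ω, (X *ᵥ (θ * z ω) - y) ⬝ᵥ (X *ᵥ (θ * z ω) - y) ∂μ =
      θ ⬝ᵥ ((Xᵀ * X) ⊙ of fun i j => ∫ ω, z ω i * z ω j ∂μ) *ᵥ θ
        - 2 * (θ ⬝ᵥ (Xᵀ *ᵥ y * fun i => ∫ ω, z ω i ∂μ)) + y ⬝ᵥ y := by
  have hquad : ∀ i j, Integrable (fun ω => ((Xᵀ * X) ⊙ vecMulVec (z ω) (z ω)) i j) μ :=
    fun i j => (hzz i j).const_mul _
  have hlin : ∀ i, Integrable (fun ω => (Xᵀ *ᵥ y * z ω) i) μ :=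
    fun i => (hz i).const_mul _
  have hquad' := integrable_dotProduct θ (integrable_mulVec_apply θ hquad)
  have hlin' := (integrable_dotProduct θ hlin).const_mul 2
  simp only [residual_dotProduct_self]
  rw [integral_add (hquad'.sub' hlin') (integrable_const _), integral_sub hquad' hlin',
    integral_dotProduct_mulVec θ θ hquad, integral_const_mul, integral_dotProduct θ hlin,
    integral_const, probReal_univ, one_smul]
  congr 4
  · ext i j
    simp only [of_apply, hadamard_apply, vecMulVec_apply, integral_const_mul]
  · ext i
    simp only [Pi.mul_apply, integral_const_mul]

end Moments

theorem gated_least_squares_unique_minimizer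
    {Ω : Type*} [MeasurableSpace Ω] (μ : Measure Ω) [IsProbabilityMeasure μ]
    (N D : ℕ) (X : Matrix (Fin N) (Fin D) ℝ) (hX : X.rank = D) (y : Fin N → ℝ)
    (z : Ω → Fin D → ℝ)
    (hmeas : ∀ d : Fin D, Measurable fun ω => z ω d)
    (hint : ∀ d d' : Fin D, Integrable (fun ω => z ω d * z ω d') μ)
    (hindep : iIndepFun (fun d ω => z ω d) μ)
    (hvar : ∀ d : Fin D, 0 < variance (fun ω => z ω d) μ) :
    ∀ θ : Fin D → ℝ,
      θ ≠ ((Xᵀ * X) ⊙ (Matrix.of fun d d' => ∫ ω, z ω d * z ω d' ∂μ))⁻¹.mulVec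
            ((Xᵀ.mulVec y) * fun d => ∫ ω, z ω d ∂μ) →
      (∫ ω, (X.mulVec ((((Xᵀ * X) ⊙ (Matrix.of fun d d' => ∫ ω', z ω' d * z ω' d' ∂μ))⁻¹.mulVec
            ((Xᵀ.mulVec y) * fun d => ∫ ω', z ω' d ∂μ)) * z ω) - y) ⬝ᵥ
          (X.mulVec ((((Xᵀ * X) ⊙ (Matrix.of fun d d' => ∫ ω', z ω' d * z ω' d' ∂μ))⁻¹.mulVec
            ((Xᵀ.mulVec y) * fun d => ∫ ω', z ω' d ∂μ)) * z ω) - y) ∂μ)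
        < ∫ ω, (X.mulVec (θ * z ω) - y) ⬝ᵥ (X.mulVec (θ * z ω) - y) ∂μ := by
  intro θ hθ
  have hz : ∀ d, MemLp (fun ω => z ω d) 2 μ := fun d =>
    (memLp_two_iff_integrable_sq (hmeas d).aestronglyMeasurable).mpr
      (by simpa only [pow_two] using hint d d)
  have hA := (posDef_transpose_mul_self_of_rank_eq_card (by simpa using hX)).hadamard
    (posDef_secondMoment hz hindep hvar)
  have hz1 : ∀ d, Integrable (fun ω => z ω d) μ := fun d => (hz d).integrable one_le_two
  simp only [integral_residual_dotProduct_self X y hz1 hint]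
  linarith [hA.quadratic_lt_of_ne_inv_mulVec _ hθ]
end

section
/- Let β*, β̂ ∈ ℝ^D, suppose β* has exactly K nonzero entries, each of magnitude greater than η > 0, and suppose ‖β̂ − β*‖₂ < η/2. Then the set of indices of the K largest-magnitude entries of β̂ equals the support of β*. -/
/-! On the support of `β*` the entries of `β̂` exceed `η / 2` in absolute value, off it they stay
below `η / 2`, since the ℓ² error bounds every coordinate error. So the support is a set of `K`
indices strictly dominating all others, and any top-`K` set of the same size must coincide with it:
an index of the support missed by `S` cannot be dominated by an index of `S` outside the support. -/

open Finset

theorem Finset.eq_of_card_eq_of_le_of_lt {ι α : Type*} [Preorder α] {f : ι → α}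
    {S T : Finset ι} (hcard : #S = #T) (hS : ∀ i ∈ S, ∀ j ∉ S, f j ≤ f i)
    (hT : ∀ i ∈ T, ∀ j ∉ T, f j < f i) : S = T := by
  have hST : S ⊆ T := by
    intro j hjS
    by_contra hjT
    obtain ⟨i, hiT, hiS⟩ : ∃ i ∈ T, i ∉ S := by
      by_contra! hTS
      exact hjT (eq_of_subset_of_card_le hTS hcard.le ▸ hjS)
    exact lt_irrefl _ ((hS j hjS i hiS).trans_lt (hT i hiT j hjT))
  exact eq_of_subset_of_card_le hST hcard.ge

theorem Real.abs_le_sqrt_sum_sq {ι : Type*} [Fintype ι] (f : ι → ℝ) (i : ι) :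
    |f i| ≤ √(∑ j, f j ^ 2) :=
  Real.abs_le_sqrt (single_le_sum (fun j _ => sq_nonneg (f j)) (mem_univ i))

theorem abs_lt_abs_of_abs_sub_lt_half {ι : Type*} {η : ℝ} {f g : ι → ℝ}
    (hmag : ∀ i, g i ≠ 0 → η < |g i|) (hclose : ∀ i, |f i - g i| < η / 2) {i j : ι}
    (hi : g i ≠ 0) (hj : g j = 0) : |f j| < |f i| := by
  have hfj : |f j| < η / 2 := by simpa [hj] using hclose j
  have hfi : |g i| - |f i| ≤ |f i - g i| := by
    rw [abs_sub_comm (f i)]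
    exact abs_sub_abs_le_abs_sub _ _
  linarith [hmag i hi, hclose i]

theorem topK_recovers_support_general
    (D K : ℕ) (η : ℝ) (βstar βhat : Fin D → ℝ)
    (hsupp : (Finset.univ.filter fun i => βstar i ≠ 0).card = K)
    (hmag : ∀ i, βstar i ≠ 0 → η < |βstar i|)
    (herr : Real.sqrt (∑ i, (βhat i - βstar i) ^ 2) < η / 2) :
    ∀ S : Finset (Fin D), S.card = K →
      (∀ i ∈ S, ∀ j ∉ S, |βhat j| ≤ |βhat i|) →
      S = Finset.univ.filter fun i => βstar i ≠ 0 := by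
  intro S hS hStop
  have hclose : ∀ i, |βhat i - βstar i| < η / 2 := fun i =>
    (Real.abs_le_sqrt_sum_sq (fun j => βhat j - βstar j) i).trans_lt herr
  refine eq_of_card_eq_of_le_of_lt (hS.trans hsupp.symm) hStop fun i hi j hj => ?_
  simp only [mem_filter, mem_univ, true_and, not_not] at hi hj
  exact abs_lt_abs_of_abs_sub_lt_half hmag hclose hi hj

theorem topK_recovers_support
    (D K : ℕ) (η : ℝ) (hη : 0 < η) (βstar βhat : Fin D → ℝ)
    (hsupp : (Finset.univ.filter fun i => βstar i ≠ 0).card = K)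
    (hmag : ∀ i, βstar i ≠ 0 → η < |βstar i|)
    (herr : Real.sqrt (∑ i, (βhat i - βstar i) ^ 2) < η / 2) :
    ∀ S : Finset (Fin D), S.card = K →
      (∀ i ∈ S, ∀ j ∉ S, |βhat j| ≤ |βhat i|) →
      S = Finset.univ.filter fun i => βstar i ≠ 0 :=
  topK_recovers_support_general D K η βstar βhat hsupp hmag herr
end
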